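/- arXiv:2207.04437 — 2 statements merged into one kernel-verified Lean document; each statement's English description precedes it below -/
import Mathlib

section
/- Let A be a left R-module with projective presentation σ_A, B a left S-module with projective presentation σ_B, and σ the induced projective presentation of (0,B) ⊕ (A,FA) in (F, S-Mod). Then: (1) if M ∈ D_{σ_A} then (M,0) ∈ D_σ; (2) if N ∈ D_{σ_B} then (0,N) ∈ D_σ; (3) if M ∈ D_{σ_A} and FM ∈ D_{σ_B} then (M,FM) with the identity structure map belongs to D_σ. -/
open CategoryTheory CategoryTheory.Limits

universe v u

section Generic

variable {𝒜 : Type*} [Category.{v} 𝒜]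

/-- For a morphism `σ : P₁ ⟶ P₀`, the class `D_σ` of objects `X` such that
`Hom(σ, X)` is surjective. -/
def Dclass {P₁ P₀ : 𝒜} (σ : P₁ ⟶ P₀) : Set 𝒜 :=
  {X | ∀ g : P₁ ⟶ X, ∃ h : P₀ ⟶ X, σ ≫ h = g}

/-- `Gen T` is the class of objects admitting an epimorphism from a coproduct (direct sum)
of copies of `T`. -/
def Gen (T : 𝒜) : Set 𝒜 :=
  {X | ∃ (ι : Type v) (c : Cofan (fun _ : ι => T)) (_ : IsColimit c) (f : c.pt ⟶ X), Epi f}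

variable [HasZeroMorphisms 𝒜]

/-- A projective presentation `P₁ → P₀ → T → 0` of an object `T`. -/
structure ProjPres (T : 𝒜) where
  P₁ : 𝒜
  P₀ : 𝒜
  σ : P₁ ⟶ P₀
  π : P₀ ⟶ T
  projective₁ : Projective P₁
  projective₀ : Projective P₀
  epi : Epi π
  w : σ ≫ π = 0
  exact : (ShortComplex.mk σ π w).Exact

/-- A class of objects is a torsion class if it is closed under (epimorphic) images,
direct sums (coproducts) and extensions. -/
def IsTorsionClass (𝒞 : Set 𝒜) : Prop :=
  (∀ ⦃X Y : 𝒜⦄ (f : X ⟶ Y), Epi f → X ∈ 𝒞 → Y ∈ 𝒞) ∧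
  (∀ (ι : Type v) (Xs : ι → 𝒜) (c : Cofan Xs), IsColimit c → (∀ i, Xs i ∈ 𝒞) → c.pt ∈ 𝒞) ∧
  (∀ (E : ShortComplex 𝒜), E.ShortExact → E.X₁ ∈ 𝒞 → E.X₃ ∈ 𝒞 → E.X₂ ∈ 𝒞)

/-- `T` is a silting object (with respect to some projective presentation) if it admits a
projective presentation `σ` with `D_σ = Gen T`. -/
def IsSilting (T : 𝒜) : Prop :=
  ∃ p : ProjPres T, Dclass p.σ = Gen T

/-- `T` is a partial silting object if it admits a projective presentation `σ` such that
`D_σ` is a torsion class and `T ∈ D_σ`. -/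
def IsPartialSilting (T : 𝒜) : Prop :=
  ∃ p : ProjPres T, IsTorsionClass (Dclass p.σ) ∧ T ∈ Dclass p.σ

end Generic

section CommaZero

variable {𝒜 : Type*} [Category 𝒜] {ℬ : Type*} [Category ℬ]
  [Preadditive 𝒜] [Preadditive ℬ] (F : 𝒜 ⥤ ℬ) [F.Additive]

instance : HasZeroMorphisms (Comma F (𝟭 ℬ)) where
  zero X Y := ⟨{ left := 0, right := 0, w := by simp }⟩
  comp_zero {X Y} f Z := by
    apply CommaMorphism.ext
    · show f.left ≫ 0 = 0
      simp
    · show f.right ≫ 0 = 0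
      simp
  zero_comp X {Y Z} f := by
    apply CommaMorphism.ext
    · show 0 ≫ f.left = 0
      simp
    · show 0 ≫ f.right = 0
      simp

end CommaZero

section ModComma

variable {R S : Type u} [Ring R] [Ring S]
  (F : ModuleCat.{u} R ⥤ ModuleCat.{u} S) [F.Additive]

/-- The object `(P, FP ⊕ Q)` of the comma category `(F, S-Mod)`, with structure map
`(1,0) : FP ⟶ FP ⊕ Q`; it is isomorphic to `(P, FP) ⊕ (0, Q)`. -/
def pairObj (P : ModuleCat.{u} R) (Q : ModuleCat.{u} S) :
    Comma F (𝟭 (ModuleCat.{u} S)) where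
  left := P
  right := ModuleCat.of S (F.obj P × Q)
  hom := ModuleCat.ofHom (LinearMap.inl S (F.obj P) Q)

/-- The morphism `(a, Fa ⊕ b) : (P₁, FP₁ ⊕ Q₁) ⟶ (P₀, FP₀ ⊕ Q₀)` in the comma
category `(F, S-Mod)`.  When `a = σ_A`, `b = σ_B` are projective presentations of `A` and
`B`, this is the induced projective presentation `σ` of `(0,B) ⊕ (A, FA)`. -/
def pairMap {P₁ P₀ : ModuleCat.{u} R} {Q₁ Q₀ : ModuleCat.{u} S}
    (a : P₁ ⟶ P₀) (b : Q₁ ⟶ Q₀) : pairObj F P₁ Q₁ ⟶ pairObj F P₀ Q₀ where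
  left := a
  right := ModuleCat.ofHom (LinearMap.prodMap (F.map a).hom b.hom)
  w := by
    apply ModuleCat.hom_ext
    apply LinearMap.ext
    intro x
    show ((LinearMap.inl S (F.obj P₀) Q₀).comp (F.map a).hom) x
        = ((LinearMap.prodMap (F.map a).hom b.hom).comp (LinearMap.inl S (F.obj P₁) Q₁)) x
    exact Prod.ext rfl (map_zero b.hom).symm

/-- The object `(M, 0)` of the comma category. -/
def leftObj (M : ModuleCat.{u} R) : Comma F (𝟭 (ModuleCat.{u} S)) where
  left := M
  right := ModuleCat.of S PUnit
  hom := 0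

/-- The object `(0, N)` of the comma category. -/
def rightObj (N : ModuleCat.{u} S) : Comma F (𝟭 (ModuleCat.{u} S)) where
  left := ModuleCat.of R PUnit
  right := N
  hom := 0

/-- The object `(M, FM)` of the comma category, with the identity structure map. -/
def diagObj (M : ModuleCat.{u} R) : Comma F (𝟭 (ModuleCat.{u} S)) where
  left := M
  right := F.obj M
  hom := 𝟙 (F.obj M)

end ModComma

/-!
The object `(P, FP ⊕ Q)` is the direct sum `(P, FP) ⊕ (0, Q)`, and a morphism from it to `X`
amounts to a pair `P ⟶ X.left`, `Q ⟶ X.right`, compatibly with precomposition by `σ`.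
So `Hom(σ, X)` is surjective as soon as `Hom(σ_A, X.left)` and `Hom(σ_B, X.right)` are,
and a zero component lies in every class `D_τ`.
-/

theorem mem_dclass_of_isZero {𝒜 : Type*} [Category 𝒜] {P₁ P₀ X : 𝒜} (σ : P₁ ⟶ P₀)
    (hX : IsZero X) : X ∈ Dclass σ :=
  fun _ => ⟨hX.from_ P₀, hX.eq_of_tgt _ _⟩

section PairHom

variable {R S : Type u} [Ring R] [Ring S] (F : ModuleCat.{u} R ⥤ ModuleCat.{u} S)

def pairHomMk {P : ModuleCat.{u} R} {Q : ModuleCat.{u} S} {X : Comma F (𝟭 (ModuleCat.{u} S))}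
    (f : P ⟶ X.left) (g : Q ⟶ X.right) : pairObj F P Q ⟶ X where
  left := f
  right := ModuleCat.ofHom (LinearMap.coprod (X.hom.hom ∘ₗ (F.map f).hom) g.hom)
  w := by
    ext x
    simp [pairObj]

variable {F}

section

variable {P : ModuleCat.{u} R} {Q : ModuleCat.{u} S} {X : Comma F (𝟭 (ModuleCat.{u} S))}

theorem pairHomMk_right_inl (f : P ⟶ X.left) (g : Q ⟶ X.right) (x : F.obj P) :
    (pairHomMk F f g).right.hom (x, 0) = X.hom.hom ((F.map f).hom x) :=
  LinearMap.congr_fun (LinearMap.coprod_inl _ _) x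

theorem pairHomMk_right_inr (f : P ⟶ X.left) (g : Q ⟶ X.right) (q : Q) :
    (pairHomMk F f g).right.hom (0, q) = g.hom q :=
  LinearMap.congr_fun (LinearMap.coprod_inr _ _) q

-- On `FP` the right component is forced by the compatibility square.
theorem pairHomMk_left_right_inr (h : pairObj F P Q ⟶ X) :
    pairHomMk F h.left (ModuleCat.ofHom (h.right.hom ∘ₗ LinearMap.inr S (F.obj P) Q)) = h := by
  apply CommaMorphism.ext
  · rfl
  · refine ModuleCat.hom_ext (LinearMap.prod_ext ?_ ?_)
    · exact (LinearMap.coprod_inl _ _).trans (congrArg ModuleCat.Hom.hom h.w)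
    · exact LinearMap.coprod_inr _ _

end

theorem pairMap_comp_pairHomMk {P₁ P₀ : ModuleCat.{u} R} {Q₁ Q₀ : ModuleCat.{u} S}
    {X : Comma F (𝟭 (ModuleCat.{u} S))} (a : P₁ ⟶ P₀) (b : Q₁ ⟶ Q₀)
    (f : P₀ ⟶ X.left) (g : Q₀ ⟶ X.right) :
    pairMap F a b ≫ pairHomMk F f g = pairHomMk F (a ≫ f) (b ≫ g) := by
  apply CommaMorphism.ext
  · rfl
  · refine ModuleCat.hom_ext (LinearMap.prod_ext ?_ ?_) <;> ext x
    · change (pairHomMk F f g).right.hom ((F.map a).hom x, b.hom 0)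
        = (pairHomMk F (a ≫ f) (b ≫ g)).right.hom (x, 0)
      rw [map_zero, pairHomMk_right_inl, pairHomMk_right_inl, F.map_comp]
      rfl
    · change (pairHomMk F f g).right.hom ((F.map a).hom 0, b.hom x)
        = (pairHomMk F (a ≫ f) (b ≫ g)).right.hom (0, x)
      rw [map_zero, pairHomMk_right_inr, pairHomMk_right_inr]
      rfl

theorem mem_dclass_pairMap {P₁ P₀ : ModuleCat.{u} R} {Q₁ Q₀ : ModuleCat.{u} S}
    {X : Comma F (𝟭 (ModuleCat.{u} S))} {a : P₁ ⟶ P₀} {b : Q₁ ⟶ Q₀}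
    (hl : X.left ∈ Dclass a) (hr : X.right ∈ Dclass b) : X ∈ Dclass (pairMap F a b) := by
  intro h
  obtain ⟨f, hf⟩ := hl h.left
  obtain ⟨g, hg⟩ := hr (ModuleCat.ofHom (h.right.hom ∘ₗ LinearMap.inr S (F.obj P₁) Q₁))
  refine ⟨pairHomMk F f g, ?_⟩
  rw [pairMap_comp_pairHomMk, hf, hg]
  exact pairHomMk_left_right_inr h

end PairHom

theorem dclass_comma_objects_general {R S : Type u} [Ring R] [Ring S]
    (F : ModuleCat.{u} R ⥤ ModuleCat.{u} S)
    {A : ModuleCat.{u} R} {B : ModuleCat.{u} S}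
    (pA : ProjPres A) (pB : ProjPres B) :
    (∀ M : ModuleCat.{u} R, M ∈ Dclass pA.σ →
      leftObj F M ∈ Dclass (pairMap F pA.σ pB.σ)) ∧
    (∀ N : ModuleCat.{u} S, N ∈ Dclass pB.σ →
      rightObj F N ∈ Dclass (pairMap F pA.σ pB.σ)) ∧
    (∀ M : ModuleCat.{u} R, M ∈ Dclass pA.σ → F.obj M ∈ Dclass pB.σ →
      diagObj F M ∈ Dclass (pairMap F pA.σ pB.σ)) := by
  have punit_mem {T : Type u} [Ring T] {P₁ P₀ : ModuleCat.{u} T} (σ : P₁ ⟶ P₀) :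
      ModuleCat.of T PUnit ∈ Dclass σ :=
    mem_dclass_of_isZero σ (ModuleCat.isZero_of_subsingleton _)
  exact ⟨fun M hM => mem_dclass_pairMap hM (punit_mem _),
    fun N hN => mem_dclass_pairMap (punit_mem _) hN,
    fun M hM hFM => mem_dclass_pairMap hM hFM⟩

/-- Corollary.  With `σ` the induced projective presentation of
`(0,B) ⊕ (A,FA)` in the comma category `(F, S-Mod)`:
(1) if `M ∈ D_{σ_A}` then `(M,0) ∈ D_σ`;
(2) if `N ∈ D_{σ_B}` then `(0,N) ∈ D_σ`;
(3) if `M ∈ D_{σ_A}` and `FM ∈ D_{σ_B}` then `(M,FM)` (with the identity structure map)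
belongs to `D_σ`. -/
theorem dclass_comma_objects {R S : Type u} [Ring R] [Ring S]
    (F : ModuleCat.{u} R ⥤ ModuleCat.{u} S) [F.Additive] [PreservesFiniteColimits F]
    {A : ModuleCat.{u} R} {B : ModuleCat.{u} S}
    (pA : ProjPres A) (pB : ProjPres B) :
    (∀ M : ModuleCat.{u} R, M ∈ Dclass pA.σ →
      leftObj F M ∈ Dclass (pairMap F pA.σ pB.σ)) ∧
    (∀ N : ModuleCat.{u} S, N ∈ Dclass pB.σ →
      rightObj F N ∈ Dclass (pairMap F pA.σ pB.σ)) ∧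
    (∀ M : ModuleCat.{u} R, M ∈ Dclass pA.σ → F.obj M ∈ Dclass pB.σ →
      diagObj F M ∈ Dclass (pairMap F pA.σ pB.σ)) :=
  dclass_comma_objects_general F pA pB
end

section
/- Let A be a left R-module with projective presentation σ_A, B a left S-module with projective presentation σ_B, and σ the induced projective presentation of (0,B) ⊕ (A,FA) in (F, S-Mod). Assume F commutes with direct sums. Then D_σ is a torsion class (equivalently, closed under direct sums) if and only if both D_{σ_A} and D_{σ_B} are torsion classes. -/
open CategoryTheory CategoryTheory.Limits

universe v u

/-!
`pairObj F P Q` represents `X ↦ Hom(P, X.left) × Hom(Q, X.right)`, compatibly with `pairMap`, so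
`X ∈ D_σ` iff `X.left ∈ D_{σ_A}` and `X.right ∈ D_{σ_B}`, and `pairObj` of projectives is
projective. Hence all three classes are closed under images and extensions, and only coproducts
matter. As `F` preserves coproducts, so do both projections of the comma category, which gives
one direction; for the other, a coproduct of modules `Mᵢ ∈ D_{σ_A}` is the left component of the
coproduct of the objects `(Mᵢ, 0) ∈ D_σ`, and symmetrically with `(0, Nᵢ)`.
-/

section Dclass

variable {𝒜 : Type*} [Category.{v} 𝒜]

def IsClosedUnderCoproducts (𝒞 : Set 𝒜) : Prop :=
  ∀ (ι : Type v) (Xs : ι → 𝒜) (c : Cofan Xs), IsColimit c → (∀ i, Xs i ∈ 𝒞) → c.pt ∈ 𝒞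

variable {P₁ P₀ : 𝒜} {σ : P₁ ⟶ P₀}

lemma Dclass.mem_of_isZero {X : 𝒜} (hX : IsZero X) : X ∈ Dclass σ :=
  fun _ => ⟨hX.from_ P₀, hX.eq_of_tgt _ _⟩

lemma Dclass.mem_of_epi [Projective P₁] {X Y : 𝒜} (f : X ⟶ Y) [Epi f] (hX : X ∈ Dclass σ) :
    Y ∈ Dclass σ := fun g => by
  obtain ⟨h, hh⟩ := hX (Projective.factorThru g f)
  exact ⟨h ≫ f, by rw [← Category.assoc, hh, Projective.factorThru_comp]⟩

lemma Dclass.mem_of_shortExact [Preadditive 𝒜] [Projective P₁] [Projective P₀]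
    {E : ShortComplex 𝒜} (hE : E.ShortExact) (h₁ : E.X₁ ∈ Dclass σ) (h₃ : E.X₃ ∈ Dclass σ) :
    E.X₂ ∈ Dclass σ := fun g => by
  have := hE.epi_g
  have := hE.exact.hasHomology
  have := hE.exact.epi_toCycles
  obtain ⟨h₃, hh₃⟩ := h₃ (g ≫ E.g)
  set k := Projective.factorThru h₃ E.g
  -- `g - σ ≫ k` dies in `X₃`, so it factors through `X₁`, where `σ` can be lifted again.
  have hd : (g - σ ≫ k) ≫ E.g = 0 := by
    rw [Preadditive.sub_comp, Category.assoc, Projective.factorThru_comp, hh₃, sub_self]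
  obtain ⟨m, hm⟩ := h₁ (Projective.factorThru (E.liftCycles _ hd) E.toCycles)
  have hm' : σ ≫ m ≫ E.f = g - σ ≫ k := by
    rw [← Category.assoc, hm, ← ShortComplex.toCycles_i, ← Category.assoc,
      Projective.factorThru_comp, ShortComplex.liftCycles_i]
  exact ⟨k + m ≫ E.f, by rw [Preadditive.comp_add, hm', add_sub_cancel]⟩

lemma isTorsionClass_dclass_iff [Preadditive 𝒜] [Projective P₁] [Projective P₀] :
    IsTorsionClass (Dclass σ) ↔ IsClosedUnderCoproducts (Dclass σ) :=
  ⟨fun h => h.2.1, fun h => ⟨fun _ _ f _ => Dclass.mem_of_epi f, h,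
    fun _ hE => Dclass.mem_of_shortExact hE⟩⟩

end Dclass

section PairObj

variable {R S : Type u} [Ring R] [Ring S] (F : ModuleCat.{u} R ⥤ ModuleCat.{u} S)

def pairObjHomEquiv (P : ModuleCat.{u} R) (Q : ModuleCat.{u} S)
    (X : Comma F (𝟭 (ModuleCat.{u} S))) :
    (pairObj F P Q ⟶ X) ≃ (P ⟶ X.left) × (Q ⟶ X.right) where
  toFun g := (g.left, ModuleCat.ofHom (LinearMap.inr S _ _) ≫ g.right)
  invFun ft :=
    { left := ft.1
      right := ModuleCat.ofHom ((F.map ft.1 ≫ X.hom).hom.coprod ft.2.hom)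
      w := ModuleCat.hom_ext (LinearMap.coprod_inl _ _).symm }
  left_inv g := by
    have hw : F.map g.left ≫ X.hom = ModuleCat.ofHom (LinearMap.inl S _ _) ≫ g.right := g.w
    ext : 1
    · rfl
    · exact ModuleCat.hom_ext (LinearMap.prod_ext
        ((LinearMap.coprod_inl _ _).trans congr(ModuleCat.Hom.hom $hw))
        (LinearMap.coprod_inr _ _))
  right_inv ft := by ext <;> simp

lemma pairObjHomEquiv_comp {P : ModuleCat.{u} R} {Q : ModuleCat.{u} S}
    {X Y : Comma F (𝟭 (ModuleCat.{u} S))} (g : pairObj F P Q ⟶ X) (h : X ⟶ Y) :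
    pairObjHomEquiv F P Q Y (g ≫ h) =
      ((pairObjHomEquiv F P Q X g).1 ≫ h.left, (pairObjHomEquiv F P Q X g).2 ≫ h.right) :=
  rfl

lemma pairObjHomEquiv_pairMap_comp {P₁ P₀ : ModuleCat.{u} R} {Q₁ Q₀ : ModuleCat.{u} S}
    (a : P₁ ⟶ P₀) (b : Q₁ ⟶ Q₀) {X : Comma F (𝟭 (ModuleCat.{u} S))}
    (g : pairObj F P₀ Q₀ ⟶ X) :
    pairObjHomEquiv F P₁ Q₁ X (pairMap F a b ≫ g) =
      (a ≫ (pairObjHomEquiv F P₀ Q₀ X g).1, b ≫ (pairObjHomEquiv F P₀ Q₀ X g).2) := by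
  have hinr : ModuleCat.ofHom (LinearMap.inr S _ _) ≫ (pairMap F a b).right =
      b ≫ ModuleCat.ofHom (LinearMap.inr S (F.obj P₀) Q₀) :=
    ModuleCat.hom_ext (LinearMap.ext fun _ => Prod.ext (map_zero (F.map a).hom) rfl)
  exact Prod.ext rfl (congrArg (· ≫ g.right) hinr)

lemma mem_dclass_pairMap_iff {P₁ P₀ : ModuleCat.{u} R} {Q₁ Q₀ : ModuleCat.{u} S}
    (a : P₁ ⟶ P₀) (b : Q₁ ⟶ Q₀) (X : Comma F (𝟭 (ModuleCat.{u} S))) :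
    X ∈ Dclass (pairMap F a b) ↔ X.left ∈ Dclass a ∧ X.right ∈ Dclass b := by
  set e₁ := pairObjHomEquiv F P₁ Q₁ X
  set e₀ := pairObjHomEquiv F P₀ Q₀ X
  constructor
  · intro hX
    have lift : ∀ f t, ∃ f' t', a ≫ f' = f ∧ b ≫ t' = t := fun f t => by
      obtain ⟨h, hh⟩ := hX (e₁.symm (f, t))
      have := congrArg e₁ hh
      rw [pairObjHomEquiv_pairMap_comp, Equiv.apply_symm_apply, Prod.mk.injEq] at this
      exact ⟨_, _, this⟩
    exact ⟨fun f => (lift f 0).imp fun _ ⟨_, hf, _⟩ => hf,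
      fun t => (lift 0 t).elim fun _ ⟨t', _, ht⟩ => ⟨t', ht⟩⟩
  · rintro ⟨hA, hB⟩ g
    obtain ⟨f', hf'⟩ := hA (e₁ g).1
    obtain ⟨t', ht'⟩ := hB (e₁ g).2
    refine ⟨e₀.symm (f', t'), e₁.injective ?_⟩
    rw [pairObjHomEquiv_pairMap_comp, Equiv.apply_symm_apply, hf', ht']

lemma projective_pairObj [PreservesColimitsOfShape WalkingSpan F]
    {P : ModuleCat.{u} R} {Q : ModuleCat.{u} S} [Projective P] [Projective Q] :
    Projective (pairObj F P Q) where
  factors {E X} g e _ := by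
    have : Epi e.left := (Comma.fst F (𝟭 _)).map_epi e
    have : Epi e.right := (Comma.snd F (𝟭 _)).map_epi e
    set ε := pairObjHomEquiv F P Q
    refine ⟨(ε E).symm (Projective.factorThru (ε X g).1 e.left,
      Projective.factorThru (ε X g).2 e.right), (ε X).injective ?_⟩
    rw [pairObjHomEquiv_comp, Equiv.apply_symm_apply, Projective.factorThru_comp,
      Projective.factorThru_comp]

end PairObj

section Coproducts

variable {R S : Type u} [Ring R] [Ring S] (F : ModuleCat.{u} R ⥤ ModuleCat.{u} S)
  [∀ J : Type u, PreservesColimitsOfShape (Discrete J) F]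
  {P₁ P₀ : ModuleCat.{u} R} {Q₁ Q₀ : ModuleCat.{u} S} {a : P₁ ⟶ P₀} {b : Q₁ ⟶ Q₀}

lemma isClosedUnderCoproducts_dclass_pairMap (ha : IsClosedUnderCoproducts (Dclass a))
    (hb : IsClosedUnderCoproducts (Dclass b)) :
    IsClosedUnderCoproducts (Dclass (pairMap F a b)) := by
  intro ι Xs c hc hXs
  simp only [mem_dclass_pairMap_iff] at hXs ⊢
  exact ⟨ha ι _ _ (isColimitCofanMkObjOfIsColimit (Comma.fst F (𝟭 _)) Xs c.inj hc)
      fun i => (hXs i).1,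
    hb ι _ _ (isColimitCofanMkObjOfIsColimit (Comma.snd F (𝟭 _)) Xs c.inj hc)
      fun i => (hXs i).2⟩

lemma isClosedUnderCoproducts_dclass_left_of_pairMap [Projective P₁]
    (h : IsClosedUnderCoproducts (Dclass (pairMap F a b))) :
    IsClosedUnderCoproducts (Dclass a) := by
  intro ι Ms c hc hMs
  have hsum : ∐ (fun i => leftObj F (Ms i)) ∈ Dclass (pairMap F a b) :=
    h ι _ _ (coproductIsCoproduct _) fun i => (mem_dclass_pairMap_iff F a b _).2
      ⟨hMs i, Dclass.mem_of_isZero (ModuleCat.isZero_of_subsingleton (.of S PUnit))⟩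
  have hl : IsColimit (Cofan.mk _ fun i => (Sigma.ι (fun i => leftObj F (Ms i)) i).left :
      Cofan Ms) :=
    isColimitOfHasCoproductOfPreservesColimit (Comma.fst F (𝟭 _)) _
  exact Dclass.mem_of_epi (hl.coconePointUniqueUpToIso hc).hom
    ((mem_dclass_pairMap_iff F a b _).1 hsum).1

lemma isClosedUnderCoproducts_dclass_right_of_pairMap [Projective Q₁]
    (h : IsClosedUnderCoproducts (Dclass (pairMap F a b))) :
    IsClosedUnderCoproducts (Dclass b) := by
  intro ι Ns c hc hNs
  have hsum : ∐ (fun i => rightObj F (Ns i)) ∈ Dclass (pairMap F a b) :=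
    h ι _ _ (coproductIsCoproduct _) fun i => (mem_dclass_pairMap_iff F a b _).2
      ⟨Dclass.mem_of_isZero (ModuleCat.isZero_of_subsingleton (.of R PUnit)), hNs i⟩
  have hr : IsColimit (Cofan.mk _ fun i => (Sigma.ι (fun i => rightObj F (Ns i)) i).right :
      Cofan Ns) :=
    isColimitOfHasCoproductOfPreservesColimit (Comma.snd F (𝟭 _)) _
  exact Dclass.mem_of_epi (hr.coconePointUniqueUpToIso hc).hom
    ((mem_dclass_pairMap_iff F a b _).1 hsum).2

end Coproducts

/-- Lemma.  Assume `F` commutes with direct sums.  With `σ` the induced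
projective presentation of `(0,B) ⊕ (A,FA)` in the comma category `(F, S-Mod)`, the class
`D_σ` is a torsion class if and only if both `D_{σ_A}` and `D_{σ_B}` are torsion classes. -/
theorem dclass_comma_torsionClass_iff {R S : Type u} [Ring R] [Ring S]
    (F : ModuleCat.{u} R ⥤ ModuleCat.{u} S) [F.Additive] [PreservesFiniteColimits F]
    [∀ J : Type u, PreservesColimitsOfShape (Discrete J) F]
    {A : ModuleCat.{u} R} {B : ModuleCat.{u} S}
    (pA : ProjPres A) (pB : ProjPres B) :
    IsTorsionClass (Dclass (pairMap F pA.σ pB.σ)) ↔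
      IsTorsionClass (Dclass pA.σ) ∧ IsTorsionClass (Dclass pB.σ) := by
  have := pA.projective₁
  have := pA.projective₀
  have := pB.projective₁
  have := pB.projective₀
  have := projective_pairObj F (P := pA.P₁) (Q := pB.P₁)
  have := projective_pairObj F (P := pA.P₀) (Q := pB.P₀)
  rw [isTorsionClass_dclass_iff, isTorsionClass_dclass_iff, isTorsionClass_dclass_iff]
  exact ⟨fun h => ⟨isClosedUnderCoproducts_dclass_left_of_pairMap F h,
    isClosedUnderCoproducts_dclass_right_of_pairMap F h⟩,
    fun ⟨ha, hb⟩ => isClosedUnderCoproducts_dclass_pairMap F ha hb⟩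
end
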